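/- arXiv:2005.14701 — 4 statements merged into one kernel-verified Lean document; each statement's English description precedes it below -/
import Mathlib

section
/- Let d ≥ 1 and let Λ ⊆ ℤ^d be finite. Then the partition functions of the membrane model satisfy the FKG lattice condition: for all subsets A, A' ⊆ Λ, Z_{Λ∖(A∪A')} · Z_{Λ∖(A∩A')} ≥ Z_{Λ∖A} · Z_{Λ∖A'}. -/
open MeasureTheory Finset Filter
open scoped Pointwise

noncomputable section

/-- The lattice `ℤ^d`. -/
abbrev Zd (d : ℕ) : Type := Fin d → ℤ

/-- The `i`-th standard unit vector of `ℤ^d`. -/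
def unitv (d : ℕ) (i : Fin d) : Zd d := fun j => if j = i then 1 else 0

/-- The discrete Laplacian. -/
def discLap (d : ℕ) (v : Zd d → ℝ) (x : Zd d) : ℝ :=
  ∑ i : Fin d, (v (x + unitv d i) - 2 * v x + v (x - unitv d i))

/-- The discrete Bilaplacian. -/
def bilap (d : ℕ) (v : Zd d → ℝ) : Zd d → ℝ :=
  fun x => discLap d (fun y => discLap d v y) x

/-- Extension of `ψ : V → ℝ` by zero to all of `ℤ^d`. -/
def extZero (d : ℕ) (V : Finset (Zd d)) (ψ : ↥V → ℝ) : Zd d → ℝ :=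
  fun x => if h : x ∈ V then ψ ⟨x, h⟩ else 0

/-- The membrane Hamiltonian `H_V(ψ) = (1/2)·Σ_x (Δ₁ψ̃(x))²`. -/
def hamiltonian (d : ℕ) (V : Finset (Zd d)) (ψ : ↥V → ℝ) : ℝ :=
  (1/2) * ∑ᶠ x : Zd d, (discLap d (extZero d V ψ) x)^2

/-- The partition function `Z_V`. -/
def Zpart (d : ℕ) (V : Finset (Zd d)) : ℝ :=
  ∫ ψ : ↥V → ℝ, Real.exp (-(hamiltonian d V ψ))

/-- The pinned partition function `Z^ε_Λ`. -/
def Zeps (d : ℕ) (ε : ℝ) (Λ : Finset (Zd d)) : ℝ :=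
  ∑ A ∈ Λ.powerset, ε ^ A.card * Zpart d (Λ \ A)

/-- The pinned-set measure `ζ^ε_Λ({A})`. -/
def zeta (d : ℕ) (ε : ℝ) (Λ A : Finset (Zd d)) : ℝ :=
  ε ^ A.card * Zpart d (Λ \ A) / Zeps d ε Λ

/-- `g` is a Green's function of `V` at `y` for the discrete Bilaplacian. -/
def IsGreen (d : ℕ) (V : Finset (Zd d)) (y : Zd d) (g : Zd d → ℝ) : Prop :=
  (∀ x : Zd d, x ∉ V → g x = 0) ∧ bilap d g y = 1 ∧ ∀ x ∈ V, x ≠ y → bilap d g x = 0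

/-- Entry `(i,j)` of the discrete Hessian `D¹_i D¹_{−j} u (x)`. -/
def hess (d : ℕ) (u : Zd d → ℝ) (i j : Fin d) (x : Zd d) : ℝ :=
  u (x + unitv d i) - u (x + unitv d i - unitv d j) - u x + u (x - unitv d j)

/-- `|∇₁²u(x)|²`, the sum of squares of the entries of the discrete Hessian. -/
def hessSq (d : ℕ) (u : Zd d → ℝ) (x : Zd d) : ℝ :=
  ∑ i : Fin d, ∑ j : Fin d, (hess d u i j x)^2

/-- `|∇₁u(x)|²`, the sum of squares of the entries of the discrete gradient. -/
def gradSq (d : ℕ) (u : Zd d → ℝ) (x : Zd d) : ℝ :=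
  ∑ i : Fin d, (u (x + unitv d i) - u x)^2

/-- The Euclidean norm of a point of `ℤ^d`. -/
def zNorm (d : ℕ) (x : Zd d) : ℝ := Real.sqrt (∑ i : Fin d, ((x i : ℝ))^2)

/-- The discrete cube `Q_r(x) = (x + [−r,r]^d) ∩ ℤ^d` (integer radius `r`). -/
def cube (d : ℕ) (r : ℤ) (x : Zd d) : Finset (Zd d) :=
  Finset.Icc (fun i => x i - r) (fun i => x i + r)

/-
Writing `ψ̃ = ∑_v ψ_v δ_v`, the Hamiltonian is the quadratic form `½ ψᵀ G_V ψ`, where `G_V` is the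
principal submatrix on `V` of the Gram matrix `G(x, y) = ∑_z Δδ_x(z) Δδ_y(z)`. A finitely
supported harmonic function on `ℤ^d` vanishes (evaluate the Laplacian just beyond the point of its
support that is extremal in direction `e₁`), so `G_V` is positive definite and
`Z_V = (2π)^{|V|/2} / √(det G_V)`. With `V = Λ ∖ A` and `W = Λ ∖ A'` the claim becomes
Koteljanskii's inequality `det G_{V∪W} · det G_{V∩W} ≤ det G_V · det G_W` for the principal minors
of a positive definite kernel. It follows by adding the points of `W ∖ V` one at a time: by Schur
complements `det G_{T∪{y}} / det G_T = G(y, y) - b_Tᵀ G_T⁻¹ b_T` with `b_T = G(·, y)|_T`, and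
`b_Tᵀ G_T⁻¹ b_T = max_w (2 wᵀ b_T - wᵀ G_T w)` increases with `T`.
-/

open Function Matrix Real

theorem Function.Injective.sum_extend_zero_mul {κ κ' R : Type*} [Fintype κ] [Fintype κ']
    [NonUnitalNonAssocSemiring R] {e : κ' → κ} (he : Injective e) (u : κ' → R) (F : κ → R) :
    ∑ i, extend e u 0 i * F i = ∑ j, u j * F (e j) :=
  (Fintype.sum_of_injective e he _ _
    (fun i hi => by rw [extend_apply' _ _ _ (by simpa using hi), Pi.zero_apply, zero_mul])
    (fun j => by rw [he.extend_apply])).symm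

theorem Finset.apply_union_mul_apply_inter_le {ι : Type*} [DecidableEq ι] {f : Finset ι → ℝ}
    (hpos : ∀ s, 0 < f s)
    (hf : ∀ S T y, S ⊆ T → y ∉ T → f (insert y T) * f S ≤ f (insert y S) * f T)
    (V W : Finset ι) : f (V ∪ W) * f (V ∩ W) ≤ f V * f W := by
  suffices h : ∀ U, Disjoint V U → ∀ C ⊆ V, f (V ∪ U) * f C ≤ f V * f (C ∪ U) by
    have hW : V ∩ W ∪ W \ V = W := by
      rw [Finset.union_comm, Finset.inter_comm, Finset.sdiff_union_inter]
    simpa [Finset.union_sdiff_self_eq_union, hW] using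
      h (W \ V) Finset.disjoint_sdiff (V ∩ W) Finset.inter_subset_left
  intro U
  induction U using Finset.induction_on with
  | empty => simp
  | insert y U hyU ih =>
    intro hdisj C hC
    rw [Finset.disjoint_insert_right] at hdisj
    have hstep := hf (C ∪ U) (V ∪ U) y (Finset.union_subset_union hC le_rfl)
      (by simp [hdisj.1, hyU])
    have hih := ih hdisj.2 C hC
    rw [Finset.union_insert, Finset.union_insert]
    refine le_of_mul_le_mul_right ?_ (hpos (C ∪ U))
    nlinarith [hpos C, hpos (insert y (C ∪ U))]

namespace Matrix

section Inverse

variable {κ κ' : Type*} [Fintype κ] [DecidableEq κ]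

theorem PosDef.two_mul_dotProduct_sub_le {N : Matrix κ κ ℝ} (hN : N.PosDef) (w x : κ → ℝ) :
    2 * (w ⬝ᵥ x) - w ⬝ᵥ (N *ᵥ w) ≤ x ⬝ᵥ (N⁻¹ *ᵥ x) := by
  set u := N⁻¹ *ᵥ x
  have hx : x = N *ᵥ u := by
    rw [mulVec_mulVec, mul_nonsing_inv _ ((isUnit_iff_isUnit_det N).1 hN.isUnit), one_mulVec]
  have hsymm : ∀ a b : κ → ℝ, a ⬝ᵥ (N *ᵥ b) = b ⬝ᵥ (N *ᵥ a) := fun a b => by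
    rw [dotProduct_mulVec, ← mulVec_transpose, (isHermitian_iff_isSymm.1 hN.isHermitian).eq,
      dotProduct_comm]
  have hnonneg : 0 ≤ (w - u) ⬝ᵥ (N *ᵥ (w - u)) := by
    simpa using hN.posSemidef.dotProduct_mulVec_nonneg (w - u)
  simp only [mulVec_sub, sub_dotProduct, dotProduct_sub] at hnonneg
  rw [hx, dotProduct_comm (N *ᵥ u), hsymm u w] at *
  linarith

theorem dotProduct_inv_mulVec_eq {N : Matrix κ κ ℝ} (hN : IsUnit N.det) (x : κ → ℝ) :
    x ⬝ᵥ (N⁻¹ *ᵥ x) = 2 * ((N⁻¹ *ᵥ x) ⬝ᵥ x) - (N⁻¹ *ᵥ x) ⬝ᵥ (N *ᵥ (N⁻¹ *ᵥ x)) := by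
  rw [mulVec_mulVec, mul_nonsing_inv _ hN, one_mulVec, dotProduct_comm x]
  ring

variable [Fintype κ'] [DecidableEq κ']

theorem PosDef.dotProduct_inv_mulVec_submatrix_le {N : Matrix κ κ ℝ} (hN : N.PosDef)
    {e : κ' → κ} (he : Injective e) (b : κ → ℝ) :
    (b ∘ e) ⬝ᵥ ((N.submatrix e e)⁻¹ *ᵥ (b ∘ e)) ≤ b ⬝ᵥ (N⁻¹ *ᵥ b) := by
  set u := (N.submatrix e e)⁻¹ *ᵥ (b ∘ e)
  have hlin : extend e u 0 ⬝ᵥ b = u ⬝ᵥ (b ∘ e) := he.sum_extend_zero_mul u b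
  have hquad : extend e u 0 ⬝ᵥ (N *ᵥ extend e u 0)
      = u ⬝ᵥ (N.submatrix e e *ᵥ u) := by
    have hcol : ∀ i, (N *ᵥ extend e u 0) i = ∑ j, u j * N i (e j) := fun i => by
      simp only [mulVec, dotProduct, mul_comm (N i _)]
      exact he.sum_extend_zero_mul u (N i)
    simp only [dotProduct, hcol]
    rw [he.sum_extend_zero_mul u]
    simp [mulVec, dotProduct, mul_comm]
  rw [dotProduct_inv_mulVec_eq ((isUnit_iff_isUnit_det _).1 (hN.submatrix he).isUnit), ← hlin,
    ← hquad]
  exact hN.two_mul_dotProduct_sub_le _ b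

end Inverse

section PrincipalSubmatrix

variable {ι : Type*} [DecidableEq ι]

abbrev principalSubmatrix (Q : Matrix ι ι ℝ) (V : Finset ι) : Matrix V V ℝ :=
  Q.submatrix (↑) (↑)

theorem isSymm_of_forall_posDef_principalSubmatrix {Q : Matrix ι ι ℝ}
    (hQ : ∀ V, (Q.principalSubmatrix V).PosDef) : Q.IsSymm :=
  IsSymm.ext fun i j => by
    simpa using (hQ {i, j}).isHermitian.apply ⟨i, by simp⟩ ⟨j, by simp⟩

theorem det_principalSubmatrix_insert (Q : Matrix ι ι ℝ) {S : Finset ι}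
    (hS : IsUnit (Q.principalSubmatrix S).det) {y : ι} (hy : y ∉ S) :
    (Q.principalSubmatrix (insert y S)).det = (Q.principalSubmatrix S).det *
      (Q y y - (fun s : S => Q y s) ⬝ᵥ ((Q.principalSubmatrix S)⁻¹ *ᵥ fun s : S => Q s y)) := by
  let e : ↥(insert y S) ≃ S ⊕ Unit :=
    (Finset.subtypeInsertEquivOption hy).trans (Equiv.optionEquivSumPUnit S)
  have : Invertible (Q.principalSubmatrix S) := invertibleOfIsUnitDet _ hS
  have hblocks : (Q.principalSubmatrix (insert y S)).submatrix e.symm e.symm =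
      fromBlocks (Q.principalSubmatrix S) (replicateCol Unit fun s : S => Q s y)
        (replicateRow Unit fun s : S => Q y s) (of fun _ _ => Q y y) := by
    ext (a | a) (b | b) <;> rfl
  rw [← det_submatrix_equiv_self e.symm, hblocks, det_fromBlocks₁₁, det_unique (n := Unit),
    invOf_eq_nonsing_inv, ← replicateRow_vecMul]
  simp [dotProduct_mulVec]

theorem det_principalSubmatrix_insert_mul_le {Q : Matrix ι ι ℝ}
    (hQ : ∀ V, (Q.principalSubmatrix V).PosDef) {S T : Finset ι} (hST : S ⊆ T) {y : ι}
    (hy : y ∉ T) :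
    (Q.principalSubmatrix (insert y T)).det * (Q.principalSubmatrix S).det ≤
      (Q.principalSubmatrix (insert y S)).det * (Q.principalSubmatrix T).det := by
  have hunit : ∀ V, IsUnit (Q.principalSubmatrix V).det := fun V =>
    (isUnit_iff_isUnit_det _).1 (hQ V).isUnit
  let incl : S → T := fun s => ⟨s, hST s.2⟩
  have hmono : (fun s : S => Q s y) ⬝ᵥ ((Q.principalSubmatrix S)⁻¹ *ᵥ fun s : S => Q s y) ≤
      (fun t : T => Q t y) ⬝ᵥ ((Q.principalSubmatrix T)⁻¹ *ᵥ fun t : T => Q t y) :=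
    (hQ T).dotProduct_inv_mulVec_submatrix_le (e := incl)
      (fun _ _ h => Subtype.ext (congrArg (fun t : T => (t : ι)) h)) fun t => Q t y
  rw [det_principalSubmatrix_insert Q (hunit T) hy,
    det_principalSubmatrix_insert Q (hunit S) (fun h => hy (hST h))]
  have hrow : ∀ V : Finset ι, (fun s : V => Q y s) = fun s : V => Q s y := fun V =>
    funext fun s => (isSymm_of_forall_posDef_principalSubmatrix hQ).apply s y
  rw [hrow S, hrow T]
  nlinarith [mul_pos (hQ T).det_pos (hQ S).det_pos]

theorem det_principalSubmatrix_union_mul_inter_le {Q : Matrix ι ι ℝ}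
    (hQ : ∀ V, (Q.principalSubmatrix V).PosDef) (V W : Finset ι) :
    (Q.principalSubmatrix (V ∪ W)).det * (Q.principalSubmatrix (V ∩ W)).det ≤
      (Q.principalSubmatrix V).det * (Q.principalSubmatrix W).det :=
  Finset.apply_union_mul_apply_inter_le (fun V => (hQ V).det_pos)
    (fun _ _ _ hST hy => det_principalSubmatrix_insert_mul_le hQ hST hy) V W

end PrincipalSubmatrix

end Matrix

theorem integral_exp_neg_half_sum_sq (κ : Type*) [Fintype κ] :
    ∫ y : κ → ℝ, exp (-(1 / 2 * ∑ i, y i ^ 2)) = √(2 * π) ^ Fintype.card κ := by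
  have hprod : ∀ y : κ → ℝ, exp (-(1 / 2 * ∑ i, y i ^ 2)) = ∏ i, exp (-(1 / 2) * y i ^ 2) :=
    fun y => by rw [← exp_sum, Finset.mul_sum, ← Finset.sum_neg_distrib]; simp [neg_mul]
  simp_rw [hprod]
  rw [integral_fintype_prod_volume_eq_pow (fun t : ℝ => exp (-(1 / 2) * t ^ 2)),
    integral_gaussian]
  congr 2
  ring

open scoped MatrixOrder in
theorem Matrix.PosDef.integral_exp_neg_half_dotProduct_mulVec {κ : Type*} [Fintype κ]
    [DecidableEq κ] {M : Matrix κ κ ℝ} (hM : M.PosDef) :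
    ∫ x : κ → ℝ, exp (-(1 / 2 * (x ⬝ᵥ (M *ᵥ x)))) = √(2 * π) ^ Fintype.card κ / √M.det := by
  -- `M = Bᵀ B`; the substitution `y = B x` has Jacobian `|det B| = √(det M)`
  obtain ⟨B, rfl⟩ := CStarAlgebra.nonneg_iff_eq_star_mul_self.mp hM.posSemidef.nonneg
  have hdet : (star B * B).det = B.det ^ 2 := by
    rw [det_mul, star_eq_conjTranspose, det_conjTranspose, star_trivial, sq]
  have hB : B.det ≠ 0 := fun h => hM.det_pos.ne' (by rw [hdet, h, sq, zero_mul])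
  have hquad : ∀ x, x ⬝ᵥ ((star B * B) *ᵥ x) = ∑ i, (toLin' B x i) ^ 2 := fun x => by
    rw [← mulVec_mulVec, dotProduct_mulVec, star_eq_conjTranspose, vecMul_conjTranspose,
      star_trivial, toLin'_apply, dotProduct_comm]
    simp [dotProduct, sq]
  simp_rw [hquad]
  rw [← integral_map (f := fun y : κ → ℝ => exp (-(1 / 2 * ∑ i, y i ^ 2)))
      (toLin' B).continuous_of_finiteDimensional.measurable.aemeasurable
      (by fun_prop : Continuous _).aestronglyMeasurable,
    map_matrix_volume_pi_eq_smul_volume_pi hB, integral_smul_measure, integral_exp_neg_half_sum_sq,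
    hdet, sqrt_sq_eq_abs, abs_inv, ENNReal.toReal_ofReal (by positivity), smul_eq_mul,
    inv_mul_eq_div]

section Membrane

variable {d : ℕ}

theorem Function.HasFiniteSupport.discLap {g : Zd d → ℝ} (hg : g.HasFiniteSupport) :
    (discLap d g).HasFiniteSupport := by
  unfold _root_.discLap
  fun_prop (disch := first | exact add_left_injective _ | exact sub_left_injective)

theorem discLap_sum_smul {κ : Type*} (s : Finset κ) (c : κ → ℝ) (g : κ → Zd d → ℝ) :
    discLap d (∑ k ∈ s, c k • g k) = ∑ k ∈ s, c k • discLap d (g k) := by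
  funext x
  simp only [discLap, Finset.sum_apply, Pi.smul_apply, smul_eq_mul, Finset.mul_sum]
  rw [Finset.sum_comm]
  refine Finset.sum_congr rfl fun i _ => ?_
  simp only [mul_add, mul_sub, Finset.sum_add_distrib, Finset.sum_sub_distrib, mul_left_comm]

theorem eq_zero_of_discLap_eq_zero (hd : 1 ≤ d) {f : Zd d → ℝ} (hf : f.HasFiniteSupport)
    (hΔ : ∀ x, discLap d f x = 0) : f = 0 := by
  by_contra hne
  let i₀ : Fin d := ⟨0, hd⟩
  obtain ⟨x, hx, hmax⟩ := Set.exists_max_image (support f) (· i₀) hf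
    (support_nonempty_iff.2 hne)
  have hfar : ∀ z : Zd d, x i₀ < z i₀ → f z = 0 := fun z hz => by
    by_contra h
    exact (hmax z h).not_gt hz
  -- the only neighbour of `x + e_{i₀}` that can lie in the support of `f` is `x`
  have hΔx : discLap d f (x + unitv d i₀) = f x := by
    rw [discLap, Finset.sum_eq_single i₀]
    · rw [hfar _ (by simp [unitv]), hfar _ (by simp [unitv]), add_sub_cancel_right]
      ring
    · intro i _ hi
      rw [hfar _ (by simp [unitv, Ne.symm hi]), hfar _ (by simp [unitv]),
        hfar _ (by simp [unitv, Ne.symm hi])]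
      ring
    · simp
  exact hx (hΔx ▸ hΔ _)

def lapGram (d : ℕ) : Matrix (Zd d) (Zd d) ℝ :=
  Matrix.of fun x y => ∑ᶠ z, discLap d (Pi.single x 1) z * discLap d (Pi.single y 1) z

theorem lapGram_isSymm : (lapGram d).IsSymm :=
  IsSymm.ext fun _ _ => finsum_congr fun _ => mul_comm _ _

theorem hasFiniteSupport_discLap_single (v : Zd d) :
    (discLap d (Pi.single v 1)).HasFiniteSupport :=
  HasFiniteSupport.discLap ((Set.finite_singleton v).subset Pi.support_single_subset)

theorem extZero_eq_sum_single (V : Finset (Zd d)) (ψ : V → ℝ) :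
    extZero d V ψ = ∑ v : V, ψ v • Pi.single (v : Zd d) 1 := by
  funext x
  simp only [Finset.sum_apply, Pi.smul_apply, Pi.single_apply, smul_eq_mul, mul_ite, mul_one,
    mul_zero]
  by_cases hx : x ∈ V
  · rw [Fintype.sum_eq_single ⟨x, hx⟩ fun v hv => if_neg fun h => hv (Subtype.ext h.symm)]
    simp [extZero, hx]
  · simp only [extZero, hx, dite_false]
    exact (Finset.sum_eq_zero fun v _ => if_neg fun h => hx (by rw [h]; exact v.2)).symm

theorem hamiltonian_eq_dotProduct (V : Finset (Zd d)) (ψ : V → ℝ) :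
    hamiltonian d V ψ = 1 / 2 * (ψ ⬝ᵥ ((lapGram d).principalSubmatrix V *ᵥ ψ)) := by
  have hfin := hasFiniteSupport_discLap_single (d := d)
  unfold hamiltonian
  congr 1
  simp only [extZero_eq_sum_single, discLap_sum_smul, Finset.sum_apply, Pi.smul_apply, smul_eq_mul,
    sq, Finset.sum_mul_sum]
  rw [finsum_sum_comm _ _ fun _ _ => by fun_prop]
  calc _ = ∑ a : V, ∑ b : V, ∑ᶠ z, ψ a * ψ b *
        (discLap d (Pi.single (a : Zd d) 1) z * discLap d (Pi.single (b : Zd d) 1) z) := by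
        refine Finset.sum_congr rfl fun a _ => ?_
        rw [finsum_sum_comm _ _ fun _ _ => by fun_prop]
        exact Finset.sum_congr rfl fun b _ => finsum_congr fun z => by ring
    _ = _ := by
        simp only [← mul_finsum]
        simp only [dotProduct, mulVec, Finset.mul_sum, lapGram, of_apply, submatrix_apply]
        exact Finset.sum_congr rfl fun a _ => Finset.sum_congr rfl fun b _ => by ring

theorem hasFiniteSupport_extZero (V : Finset (Zd d)) (ψ : V → ℝ) :
    (extZero d V ψ).HasFiniteSupport :=
  V.finite_toSet.subset fun x hx => by
    by_contra h
    exact hx (dif_neg h)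

theorem posDef_lapGram_principalSubmatrix (hd : 1 ≤ d) (V : Finset (Zd d)) :
    ((lapGram d).principalSubmatrix V).PosDef := by
  refine PosDef.of_dotProduct_mulVec_pos
    (isHermitian_iff_isSymm.2 (lapGram_isSymm.submatrix _)) fun ψ hψ => ?_
  have hquad : ψ ⬝ᵥ ((lapGram d).principalSubmatrix V *ᵥ ψ) =
      ∑ᶠ z, discLap d (extZero d V ψ) z ^ 2 := by
    have h := hamiltonian_eq_dotProduct V ψ
    rw [hamiltonian] at h
    linarith
  have hext : extZero d V ψ ≠ 0 := fun h => by
    obtain ⟨v, hv⟩ := ne_iff.1 hψ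
    exact hv (by simpa [extZero] using congrFun h v)
  obtain ⟨z, hz⟩ : ∃ z, discLap d (extZero d V ψ) z ≠ 0 := by
    by_contra! h
    exact hext (eq_zero_of_discLap_eq_zero hd (hasFiniteSupport_extZero V ψ) h)
  rw [star_trivial, hquad]
  exact finsum_pos (fun _ => sq_nonneg _) ⟨z, by positivity⟩
    (by rw [HasFiniteSupport, support_pow _ two_ne_zero]
        exact (hasFiniteSupport_extZero V ψ).discLap)

theorem Zpart_eq (hd : 1 ≤ d) (V : Finset (Zd d)) :
    Zpart d V = √(2 * π) ^ V.card / √((lapGram d).principalSubmatrix V).det := by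
  simp_rw [Zpart, hamiltonian_eq_dotProduct]
  rw [(posDef_lapGram_principalSubmatrix hd V).integral_exp_neg_half_dotProduct_mulVec,
    Fintype.card_coe]

end Membrane

theorem Zpart_FKG_lattice_general (d : ℕ) (hd : 1 ≤ d) (Λ : Finset (Zd d))
    (A A' : Finset (Zd d)) :
    Zpart d (Λ \ A) * Zpart d (Λ \ A')
      ≤ Zpart d (Λ \ (A ∪ A')) * Zpart d (Λ \ (A ∩ A')) := by
  rw [Finset.sdiff_union_distrib, Finset.sdiff_inter_distrib_right]
  have hdet := fun U => (posDef_lapGram_principalSubmatrix hd U).det_pos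
  rw [Zpart_eq hd, Zpart_eq hd, Zpart_eq hd, Zpart_eq hd, div_mul_div_comm, div_mul_div_comm,
    ← pow_add, ← pow_add, Finset.card_inter_add_card_union, ← Real.sqrt_mul (hdet _).le,
    ← Real.sqrt_mul (hdet _).le]
  refine div_le_div_of_nonneg_left (by positivity) (Real.sqrt_pos.2 (mul_pos (hdet _) (hdet _)))
    (Real.sqrt_le_sqrt ?_)
  rw [mul_comm]
  exact det_principalSubmatrix_union_mul_inter_le (posDef_lapGram_principalSubmatrix hd) _ _

/-- FKG lattice condition for the membrane partition functions. -/
theorem Zpart_FKG_lattice (d : ℕ) (hd : 1 ≤ d) (Λ : Finset (Zd d))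
    (A A' : Finset (Zd d)) (hA : A ⊆ Λ) (hA' : A' ⊆ Λ) :
    Zpart d (Λ \ A) * Zpart d (Λ \ A')
      ≤ Zpart d (Λ \ (A ∪ A')) * Zpart d (Λ \ (A ∩ A')) :=
  Zpart_FKG_lattice_general d hd Λ A A'
end
end

section
/- Let d ≥ 1, let A ⊆ A' ⊆ Λ ⊆ ℤ^d with Λ finite, and let x ∈ Λ∖A'. If g is a Green's function of Λ∖A at x and g' is a Green's function of Λ∖A' at x, then 0 ≤ g'(x) ≤ g(x) (i.e. the variance of the membrane model is non-increasing in the pinned set). -/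
open MeasureTheory Finset Filter
open scoped Pointwise

noncomputable section

section GreenAux

open Function

variable {d : ℕ}

lemma mulRightFin {f g : Zd d → ℝ} (hg : (support g).Finite) :
    (support fun z => f z * g z).Finite := by
  apply hg.subset
  intro x hx
  simp only [mem_support] at hx ⊢
  intro h; exact hx (by rw [h, mul_zero])

lemma mulLeftFin {f g : Zd d → ℝ} (hf : (support f).Finite) :
    (support fun z => f z * g z).Finite := by
  apply hf.subset
  intro x hx
  simp only [mem_support] at hx ⊢
  intro h; exact hx (by rw [h, zero_mul])

lemma subFin {f g : Zd d → ℝ} (hf : (support f).Finite) (hg : (support g).Finite) :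
    (support fun z => f z - g z).Finite := by
  apply (hf.union hg).subset
  intro x hx
  by_contra hc
  simp only [Set.mem_union, mem_support, not_or, not_not] at hc
  exact hx (by simp only [mem_support, hc.1, hc.2, sub_zero, not_not])

lemma shiftFin {u : Zd d → ℝ} (hu : (support u).Finite) (c : Zd d) :
    (support fun z => u (z + c)).Finite := by
  have : (support fun z => u (z + c)) = (fun z : Zd d => z + c) ⁻¹' support u := rfl
  rw [this]
  exact hu.preimage (add_left_injective c).injOn

lemma shiftFin' {u : Zd d → ℝ} (hu : (support u).Finite) (c : Zd d) :
    (support fun z => u (z - c)).Finite := by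
  have := shiftFin hu (-c)
  simpa only [sub_eq_add_neg] using this

lemma supp_discLap_finite {u : Zd d → ℝ} (hu : (support u).Finite) :
    (support (discLap d u)).Finite := by
  have h : support (discLap d u) ⊆
      ⋃ i : Fin d, ((support (fun z => u (z + unitv d i)) ∪ support u) ∪
        support (fun z => u (z - unitv d i))) := by
    intro x hx
    rw [mem_support] at hx
    by_contra hc
    simp only [Set.mem_iUnion, Set.mem_union, mem_support, not_exists, not_or, not_not] at hc
    apply hx
    refine Finset.sum_eq_zero fun i _ => ?_
    rcases hc i with ⟨⟨h1, h2⟩, h3⟩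
    rw [h1, h2, h3]; ring
  exact Set.Finite.subset (Set.finite_iUnion fun i =>
    ((shiftFin hu _).union hu).union (shiftFin' hu _)) h

lemma finsum_shift (f : Zd d → ℝ) (c : Zd d) : ∑ᶠ z, f (z + c) = ∑ᶠ z, f z :=
  finsum_comp_equiv (Equiv.addRight c)

lemma finsum_mul_shift (u v : Zd d → ℝ) (c : Zd d) :
    ∑ᶠ z, u (z + c) * v z = ∑ᶠ z, u z * v (z - c) := by
  have h := finsum_shift (fun z => u z * v (z - c)) c
  simp only [add_sub_cancel_right] at h
  exact h

lemma adjoint_single (u v : Zd d → ℝ) (hu : (support u).Finite) (hv : (support v).Finite)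
    (e : Zd d) :
    ∑ᶠ z, (u (z + e) - 2 * u z + u (z - e)) * v z
      = ∑ᶠ z, u z * (v (z + e) - 2 * v z + v (z - e)) := by
  have h1 : (support fun z => u (z + e) * v z).Finite := mulRightFin hv
  have h2 : (support fun z => u z * ((-2 : ℝ) * v z)).Finite := mulLeftFin hu
  have h3 : (support fun z => u (z - e) * v z).Finite := mulRightFin hv
  have h4 : (support fun z => u z * v (z + e)).Finite := mulLeftFin hu
  have h5 : (support fun z => u z * v (z - e)).Finite := mulLeftFin hu
  have e1 : ∑ᶠ z, (u (z + e) - 2 * u z + u (z - e)) * v z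
      = (∑ᶠ z, (u (z + e) * v z + u z * ((-2 : ℝ) * v z))) + ∑ᶠ z, u (z - e) * v z := by
    rw [← finsum_add_distrib ((h1.union h2).subset (by
      intro x hx
      by_contra hc
      simp only [Set.mem_union, mem_support, not_or, not_not] at hc
      exact (mem_support.mp hx) (by rw [hc.1, hc.2, add_zero]))) h3]
    congr 1; funext z; ring
  have e2 : ∑ᶠ z, (u (z + e) * v z + u z * ((-2 : ℝ) * v z))
      = (∑ᶠ z, u (z + e) * v z) + ∑ᶠ z, u z * ((-2 : ℝ) * v z) := finsum_add_distrib h1 h2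
  have s1 : ∑ᶠ z, u (z + e) * v z = ∑ᶠ z, u z * v (z - e) := finsum_mul_shift u v e
  have s3 : ∑ᶠ z, u (z - e) * v z = ∑ᶠ z, u z * v (z + e) := by
    have h := finsum_mul_shift u v (-e)
    simp only [sub_eq_add_neg, sub_neg_eq_add] at h ⊢
    simpa using h
  have e3 : ∑ᶠ z, u z * (v (z + e) - 2 * v z + v (z - e))
      = ((∑ᶠ z, u z * v (z - e)) + ∑ᶠ z, u z * ((-2 : ℝ) * v z)) + ∑ᶠ z, u z * v (z + e) := by
    rw [← finsum_add_distrib h5 h2, ← finsum_add_distrib (((h5.union h2)).subset (by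
      intro x hx
      by_contra hc
      simp only [Set.mem_union, mem_support, not_or, not_not] at hc
      exact (mem_support.mp hx) (by rw [hc.1, hc.2, add_zero]))) h4]
    congr 1; funext z; ring
  rw [e1, e2, s1, s3, e3]

lemma adjoint (u v : Zd d → ℝ) (hu : (support u).Finite) (hv : (support v).Finite) :
    ∑ᶠ z, discLap d u z * v z = ∑ᶠ z, u z * discLap d v z := by
  have lhs : (fun z => discLap d u z * v z)
      = fun z => ∑ i : Fin d, (u (z + unitv d i) - 2 * u z + u (z - unitv d i)) * v z := by
    funext z; rw [discLap, Finset.sum_mul]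
  have rhs : (fun z => u z * discLap d v z)
      = fun z => ∑ i : Fin d, u z * (v (z + unitv d i) - 2 * v z + v (z - unitv d i)) := by
    funext z; rw [discLap, Finset.mul_sum]
  calc ∑ᶠ z, discLap d u z * v z
      = ∑ᶠ z, ∑ i : Fin d, (u (z + unitv d i) - 2 * u z + u (z - unitv d i)) * v z := by
        rw [lhs]
    _ = ∑ i : Fin d, ∑ᶠ z, (u (z + unitv d i) - 2 * u z + u (z - unitv d i)) * v z :=
        finsum_sum_comm _ _ (fun i _ => mulRightFin hv)
    _ = ∑ i : Fin d, ∑ᶠ z, u z * (v (z + unitv d i) - 2 * v z + v (z - unitv d i)) :=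
        Finset.sum_congr rfl fun i _ => adjoint_single u v hu hv _
    _ = ∑ᶠ z, ∑ i : Fin d, u z * (v (z + unitv d i) - 2 * v z + v (z - unitv d i)) :=
        (finsum_sum_comm _ _ (fun i _ => mulLeftFin hu)).symm
    _ = ∑ᶠ z, u z * discLap d v z := by rw [rhs]

lemma pairing_bilap (u v : Zd d → ℝ) (hu : (support u).Finite) (hv : (support v).Finite) :
    ∑ᶠ z, discLap d u z * discLap d v z = ∑ᶠ z, u z * bilap d v z :=
  adjoint u (discLap d v) hu (supp_discLap_finite hv)

lemma pairing_eval {V : Finset (Zd d)} {y : Zd d} (hy : y ∈ V) (u h : Zd d → ℝ)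
    (hu : ∀ z, z ∉ V → u z = 0) (h1 : h y = 1) (h0 : ∀ z ∈ V, z ≠ y → h z = 0) :
    ∑ᶠ z, u z * h z = u y := by
  rw [finsum_eq_sum_of_support_subset (fun z => u z * h z) (s := V) (by
    intro z hz
    by_contra hc
    exact (mem_support.mp hz) (by rw [hu z hc, zero_mul]))]
  rw [Finset.sum_eq_single y (fun z hz hzy => by rw [h0 z hz hzy, mul_zero])
    (fun hy' => absurd hy hy')]
  rw [h1, mul_one]

end GreenAux

/-- The variance of the membrane model is non-increasing in the
pinned set. -/
theorem green_monotone_in_pinned_set (d : ℕ) (hd : 1 ≤ d)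
    (Λ A A' : Finset (Zd d)) (hAA' : A ⊆ A') (hA'Λ : A' ⊆ Λ)
    (x : Zd d) (hx : x ∈ Λ \ A')
    (g g' : Zd d → ℝ)
    (hg : IsGreen d (Λ \ A) x g) (hg' : IsGreen d (Λ \ A') x g') :
    0 ≤ g' x ∧ g' x ≤ g x := by
  classical
  have hxV' : x ∈ Λ \ A' := hx
  have hxV : x ∈ Λ \ A := by
    rw [Finset.mem_sdiff] at hxV' ⊢
    exact ⟨hxV'.1, fun h => hxV'.2 (hAA' h)⟩
  have hsub : (Λ \ A' : Finset (Zd d)) ⊆ Λ \ A :=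
    Finset.sdiff_subset_sdiff (Finset.Subset.refl Λ) hAA'
  have hgs : (Function.support g).Finite := by
    apply Set.Finite.subset (Λ \ A).finite_toSet
    intro z hz
    by_contra hc
    exact (Function.mem_support.mp hz) (hg.1 z (by simpa using hc))
  have hg's : (Function.support g').Finite := by
    apply Set.Finite.subset (Λ \ A').finite_toSet
    intro z hz
    by_contra hc
    exact (Function.mem_support.mp hz) (hg'.1 z (by simpa using hc))
  set a := discLap d g with ha
  set b := discLap d g' with hb
  have has : (Function.support a).Finite := supp_discLap_finite hgs
  have hbs : (Function.support b).Finite := supp_discLap_finite hg's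
  -- B(g',g') = g' x
  have S4 : ∑ᶠ z, b z * b z = g' x := by
    rw [hb, pairing_bilap g' g' hg's hg's]
    exact pairing_eval hxV' g' (bilap d g') hg'.1 hg'.2.1 hg'.2.2
  -- B(g,g) = g x
  have S1 : ∑ᶠ z, a z * a z = g x := by
    rw [ha, pairing_bilap g g hgs hgs]
    exact pairing_eval hxV g (bilap d g) hg.1 hg.2.1 hg.2.2
  -- B(g',g) = g' x
  have S3 : ∑ᶠ z, b z * a z = g' x := by
    rw [hb, ha, pairing_bilap g' g hg's hgs]
    exact pairing_eval hxV' g' (bilap d g) hg'.1 hg.2.1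
      (fun z hz hzx => hg.2.2 z (hsub hz) hzx)
  have S2 : ∑ᶠ z, a z * b z = g' x := by
    rw [← S3]
    congr 1; funext z; ring
  have pos1 : (0 : ℝ) ≤ g' x := by
    rw [← S4]
    exact finsum_nonneg fun z => mul_self_nonneg _
  refine ⟨pos1, ?_⟩
  -- 0 ≤ B(g-g', g-g') = g x - g' x
  have key : (0 : ℝ) ≤ ∑ᶠ z, (a z - b z) * (a z - b z) :=
    finsum_nonneg fun z => mul_self_nonneg _
  have habfin : (Function.support fun z => a z * a z - a z * b z).Finite :=
    subFin (mulLeftFin has) (mulLeftFin has)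
  have hbbfin : (Function.support fun z => b z * a z - b z * b z).Finite :=
    subFin (mulLeftFin hbs) (mulLeftFin hbs)
  have expand : ∑ᶠ z, (a z - b z) * (a z - b z)
      = ((∑ᶠ z, a z * a z) - ∑ᶠ z, a z * b z) - ((∑ᶠ z, b z * a z) - ∑ᶠ z, b z * b z) := by
    rw [← finsum_sub_distrib (mulLeftFin has) (mulLeftFin has),
      ← finsum_sub_distrib (mulLeftFin hbs) (mulLeftFin hbs),
      ← finsum_sub_distrib habfin hbbfin]
    congr 1; funext z; ring
  rw [expand, S1, S2, S3, S4] at key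
  linarith
end
end

section
/- Let d ≥ 1, let Λ ⊆ ℤ^d be finite, and let x, y ∈ Λ. Let g_x be a Green's function of Λ at x and g_y a Green's function of Λ at y. Then g_y(x) = Σ_{z∈ℤ^d} Σ_{i,j=1}^d D¹_iD¹_{−j}g_x(z) · D¹_iD¹_{−j}g_y(z) (a sum with only finitely many nonzero terms), and moreover |g_y(x)| ≤ √(g_x(x)·g_y(y)). -/
open MeasureTheory Finset Filter
open scoped Pointwise

noncomputable section

namespace GreenAux

variable {d : ℕ}

def Ebox (d : ℕ) : Finset (Zd d) := Finset.Icc (fun _ => (-2:ℤ)) (fun _ => 2)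

def Sbox (d : ℕ) (Λ : Finset (Zd d)) : Finset (Zd d) := Λ + Ebox d

lemma mem_Ebox {a : Zd d} (h : ∀ k, -2 ≤ a k ∧ a k ≤ 2) : a ∈ Ebox d := by
  simp only [Ebox, Finset.mem_Icc, Pi.le_def]
  exact ⟨fun k => (h k).1, fun k => (h k).2⟩

lemma unitv_cases (i k : Fin d) : unitv d i k = 0 ∨ unitv d i k = 1 := by
  by_cases h : k = i <;> simp [unitv, h]

lemma zero_mem_Ebox : (0 : Zd d) ∈ Ebox d := mem_Ebox fun k => by simp

lemma mem_Sbox {Λ : Finset (Zd d)} {z a : Zd d} (h : z + a ∈ Λ) (ha : -a ∈ Ebox d) :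
    z ∈ Sbox d Λ := by
  have hz : (z + a) + -a = z := by abel
  have := Finset.add_mem_add h ha
  rwa [hz] at this

lemma mem_Sbox_self {Λ : Finset (Zd d)} {z : Zd d} (h : z ∈ Λ) : z ∈ Sbox d Λ := by
  refine mem_Sbox (a := 0) ?_ (by simpa using zero_mem_Ebox)
  simpa using h

def Tcd (d : ℕ) (u v : Zd d → ℝ) (c : Zd d) : ℝ := ∑ᶠ z, u z * v (z + c)

lemma finsum_translate (f : Zd d → ℝ) (a : Zd d) : ∑ᶠ z, f (z + a) = ∑ᶠ z, f z := by
  simpa using finsum_comp_equiv (Equiv.addRight a) (f := f)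

def Fterm (d : ℕ) (u : Zd d → ℝ) (i j : Fin d) (z : Zd d) : ℝ :=
  u (z + (unitv d i + unitv d j)) - 2 * u (z + unitv d i) + u (z + (unitv d i - unitv d j))
  - 2 * u (z + unitv d j) + 4 * u z - 2 * u (z + -unitv d j)
  + u (z + (unitv d j - unitv d i)) - 2 * u (z + -unitv d i) + u (z + -(unitv d i + unitv d j))

lemma bilap_expand (u : Zd d → ℝ) (z : Zd d) :
    bilap d u z = ∑ i : Fin d, ∑ j : Fin d, Fterm d u i j z := by
  simp only [bilap, discLap]
  refine Finset.sum_congr rfl fun i _ => ?_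
  rw [Finset.mul_sum, ← Finset.sum_sub_distrib, ← Finset.sum_add_distrib]
  refine Finset.sum_congr rfl fun j _ => ?_
  rw [show z + unitv d i + unitv d j = z + (unitv d i + unitv d j) by abel,
      show z + unitv d i - unitv d j = z + (unitv d i - unitv d j) by abel,
      show z - unitv d j = z + -unitv d j by abel,
      show z - unitv d i + unitv d j = z + (unitv d j - unitv d i) by abel,
      show z - unitv d i - unitv d j = z + -(unitv d i + unitv d j) by abel,
      show z - unitv d i = z + -unitv d i by abel]
  simp only [Fterm]
  ring

lemma hess_eq (w : Zd d → ℝ) (i j : Fin d) (z : Zd d) :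
    hess d w i j z = w (z + unitv d i) - w (z + (unitv d i - unitv d j)) - w z
      + w (z + -unitv d j) := by
  simp only [hess]
  rw [show z + unitv d i - unitv d j = z + (unitv d i - unitv d j) by abel,
      show z - unitv d j = z + -unitv d j by abel]

section UV
variable (Λ : Finset (Zd d)) (u v : Zd d → ℝ) (hu : ∀ z, z ∉ Λ → u z = 0)

include hu in
lemma HSab (a b c : Zd d) (ha : -a ∈ Ebox d) (hc : a + c = b) :
    ∑ z ∈ Sbox d Λ, u (z + a) * v (z + b) = Tcd d u v c := by
  have hsupp : Function.support (fun z => u (z + a) * v (z + b)) ⊆ Sbox d Λ := by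
    intro z hz
    have h1 : u (z + a) ≠ 0 := left_ne_zero_of_mul hz
    have h2 : z + a ∈ Λ := by by_contra h; exact h1 (hu _ h)
    exact mem_Sbox h2 ha
  rw [← finsum_eq_sum_of_support_subset _ hsupp]
  have h3 : ∀ z : Zd d, u (z + a) * v (z + b) = u (z + a) * v ((z + a) + c) := by
    intro z; rw [add_assoc, hc]
  calc ∑ᶠ z, u (z + a) * v (z + b)
      = ∑ᶠ z, u (z + a) * v ((z + a) + c) := finsum_congr h3
    _ = ∑ᶠ w, u w * v (w + c) := finsum_translate (fun w => u w * v (w + c)) a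

include hu in
lemma HSa0 (a c : Zd d) (ha : -a ∈ Ebox d) (hc : a + c = 0) :
    ∑ z ∈ Sbox d Λ, u (z + a) * v z = Tcd d u v c := by
  have hsupp : Function.support (fun z => u (z + a) * v z) ⊆ Sbox d Λ := by
    intro z hz
    have h1 : u (z + a) ≠ 0 := left_ne_zero_of_mul hz
    have h2 : z + a ∈ Λ := by by_contra h; exact h1 (hu _ h)
    exact mem_Sbox h2 ha
  rw [← finsum_eq_sum_of_support_subset _ hsupp]
  have h3 : ∀ z : Zd d, u (z + a) * v z = u (z + a) * v ((z + a) + c) := by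
    intro z; rw [add_assoc, hc, add_zero]
  calc ∑ᶠ z, u (z + a) * v z
      = ∑ᶠ z, u (z + a) * v ((z + a) + c) := finsum_congr h3
    _ = ∑ᶠ w, u w * v (w + c) := finsum_translate (fun w => u w * v (w + c)) a

include hu in
lemma HS0b (b : Zd d) :
    ∑ z ∈ Sbox d Λ, u z * v (z + b) = Tcd d u v b := by
  have hsupp : Function.support (fun z => u z * v (z + b)) ⊆ Sbox d Λ := by
    intro z hz
    have h1 : u z ≠ 0 := left_ne_zero_of_mul hz
    exact mem_Sbox_self (by by_contra h; exact h1 (hu _ h))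
  rw [← finsum_eq_sum_of_support_subset _ hsupp]; rfl

include hu in
lemma HS00 :
    ∑ z ∈ Sbox d Λ, u z * v z = Tcd d u v 0 := by
  have hsupp : Function.support (fun z => u z * v z) ⊆ Sbox d Λ := by
    intro z hz
    have h1 : u z ≠ 0 := left_ne_zero_of_mul hz
    exact mem_Sbox_self (by by_contra h; exact h1 (hu _ h))
  rw [← finsum_eq_sum_of_support_subset _ hsupp]
  exact finsum_congr fun z => by rw [add_zero]

include hu in
lemma perij (i j : Fin d) :
    ∑ z ∈ Sbox d Λ, Fterm d u i j z * v z
      = ∑ z ∈ Sbox d Λ, hess d u i j z * hess d v i j z := by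
  set p := unitv d i with hp
  set q := unitv d j with hq
  have e1 : -p ∈ Ebox d := by
    apply mem_Ebox; intro k; have h1 := unitv_cases i k; have h2 := unitv_cases j k
    simp only [hp, hq, Pi.neg_apply, Pi.add_apply, Pi.sub_apply]; omega
  have e2 : -q ∈ Ebox d := by
    apply mem_Ebox; intro k; have h1 := unitv_cases i k; have h2 := unitv_cases j k
    simp only [hp, hq, Pi.neg_apply, Pi.add_apply, Pi.sub_apply]; omega
  have e3 : -(p - q) ∈ Ebox d := by
    apply mem_Ebox; intro k; have h1 := unitv_cases i k; have h2 := unitv_cases j k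
    simp only [hp, hq, Pi.neg_apply, Pi.add_apply, Pi.sub_apply]; omega
  have e4 : -(q - p) ∈ Ebox d := by
    apply mem_Ebox; intro k; have h1 := unitv_cases i k; have h2 := unitv_cases j k
    simp only [hp, hq, Pi.neg_apply, Pi.add_apply, Pi.sub_apply]; omega
  have e5 : -(p + q) ∈ Ebox d := by
    apply mem_Ebox; intro k; have h1 := unitv_cases i k; have h2 := unitv_cases j k
    simp only [hp, hq, Pi.neg_apply, Pi.add_apply, Pi.sub_apply]; omega
  have e6 : -(-q) ∈ Ebox d := by
    apply mem_Ebox; intro k; have h1 := unitv_cases i k; have h2 := unitv_cases j k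
    simp only [hp, hq, Pi.neg_apply, Pi.add_apply, Pi.sub_apply]; omega
  have e7 : -(-p) ∈ Ebox d := by
    apply mem_Ebox; intro k; have h1 := unitv_cases i k; have h2 := unitv_cases j k
    simp only [hp, hq, Pi.neg_apply, Pi.add_apply, Pi.sub_apply]; omega
  have e8 : -(-(p + q)) ∈ Ebox d := by
    apply mem_Ebox; intro k; have h1 := unitv_cases i k; have h2 := unitv_cases j k
    simp only [hp, hq, Pi.neg_apply, Pi.add_apply, Pi.sub_apply]; omega
  simp only [hess_eq, Fterm, ← hp, ← hq, sub_mul, add_mul, mul_sub, mul_add, mul_assoc,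
    Finset.sum_sub_distrib, Finset.sum_add_distrib, ← Finset.mul_sum]
  rw [HSab Λ u v hu p p 0 e1 (by abel),
      HSab Λ u v hu p (p - q) (-q) e1 (by abel),
      HSab Λ u v hu p (-q) (-(p + q)) e1 (by abel),
      HSab Λ u v hu (p - q) p q e3 (by abel),
      HSab Λ u v hu (p - q) (p - q) 0 e3 (by abel),
      HSab Λ u v hu (p - q) (-q) (-p) e3 (by abel),
      HSab Λ u v hu (-q) p (p + q) e6 (by abel),
      HSab Λ u v hu (-q) (p - q) p e6 (by abel),
      HSab Λ u v hu (-q) (-q) 0 e6 (by abel),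
      HS0b Λ u v hu p,
      HS0b Λ u v hu (p - q),
      HS0b Λ u v hu (-q),
      HSa0 Λ u v hu p (-p) e1 (by abel),
      HSa0 Λ u v hu (p - q) (q - p) e3 (by abel),
      HSa0 Λ u v hu (-q) q e6 (by abel),
      HSa0 Λ u v hu (p + q) (-(p + q)) e5 (by abel),
      HSa0 Λ u v hu q (-q) e2 (by abel),
      HSa0 Λ u v hu (-p) p e7 (by abel),
      HSa0 Λ u v hu (q - p) (p - q) e4 (by abel),
      HSa0 Λ u v hu (-(p + q)) (p + q) e8 (by abel),
      HS00 Λ u v hu]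
  ring

include hu in
lemma hess_supp (w : Zd d → ℝ) :
    Function.support (fun z => ∑ i : Fin d, ∑ j : Fin d,
      hess d u i j z * hess d w i j z) ⊆ Sbox d Λ := by
  intro z hz
  obtain ⟨i, -, hi⟩ := Finset.exists_ne_zero_of_sum_ne_zero hz
  obtain ⟨j, -, hj⟩ := Finset.exists_ne_zero_of_sum_ne_zero hi
  have h1 : hess d u i j z ≠ 0 := left_ne_zero_of_mul hj
  have h4 : u (z + unitv d i) ≠ 0 ∨ u (z + (unitv d i - unitv d j)) ≠ 0 ∨ u z ≠ 0 ∨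
      u (z + -unitv d j) ≠ 0 := by
    by_contra h
    push_neg at h
    obtain ⟨ha, hb, hc, hd⟩ := h
    rw [hess_eq, ha, hb, hc, hd] at h1
    simp at h1
  have hmem : ∀ a : Zd d, u (z + a) ≠ 0 → z + a ∈ Λ := by
    intro a h; by_contra h'; exact h (hu _ h')
  have eI : -unitv d i ∈ Ebox d := by
    apply mem_Ebox; intro k; have h1 := unitv_cases i k; have h2 := unitv_cases j k
    simp only [Pi.neg_apply, Pi.add_apply, Pi.sub_apply]; omega
  have eIJ : -(unitv d i - unitv d j) ∈ Ebox d := by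
    apply mem_Ebox; intro k; have h1 := unitv_cases i k; have h2 := unitv_cases j k
    simp only [Pi.neg_apply, Pi.add_apply, Pi.sub_apply]; omega
  have eJ : -(-unitv d j) ∈ Ebox d := by
    apply mem_Ebox; intro k; have h1 := unitv_cases i k; have h2 := unitv_cases j k
    simp only [Pi.neg_apply, Pi.add_apply, Pi.sub_apply]; omega
  rcases h4 with h | h | h | h
  · exact mem_Sbox (hmem _ h) eI
  · exact mem_Sbox (hmem _ h) eIJ
  · exact mem_Sbox_self (by by_contra h'; exact h (hu _ h'))
  · exact mem_Sbox (hmem _ h) eJ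

include hu in
lemma key (hv : ∀ z, z ∉ Λ → v z = 0) :
    ∑ᶠ z, bilap d u z * v z
      = ∑ᶠ z : Zd d, ∑ i : Fin d, ∑ j : Fin d, hess d u i j z * hess d v i j z := by
  have hL : Function.support (fun z => bilap d u z * v z) ⊆ Sbox d Λ := by
    intro z hz
    have h1 : v z ≠ 0 := right_ne_zero_of_mul hz
    exact mem_Sbox_self (by by_contra h; exact h1 (hv _ h))
  rw [finsum_eq_sum_of_support_subset _ hL,
      finsum_eq_sum_of_support_subset _ (hess_supp Λ u hu v)]
  calc ∑ z ∈ Sbox d Λ, bilap d u z * v z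
      = ∑ z ∈ Sbox d Λ, ∑ i : Fin d, ∑ j : Fin d, Fterm d u i j z * v z := by
        refine Finset.sum_congr rfl fun z _ => ?_
        rw [bilap_expand, Finset.sum_mul]
        exact Finset.sum_congr rfl fun i _ => Finset.sum_mul _ _ _
    _ = ∑ i : Fin d, ∑ j : Fin d, ∑ z ∈ Sbox d Λ, Fterm d u i j z * v z := by
        rw [Finset.sum_comm]
        exact Finset.sum_congr rfl fun i _ => Finset.sum_comm
    _ = ∑ i : Fin d, ∑ j : Fin d, ∑ z ∈ Sbox d Λ, hess d u i j z * hess d v i j z := by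
        refine Finset.sum_congr rfl fun i _ => Finset.sum_congr rfl fun j _ => ?_
        exact perij Λ u v hu i j
    _ = ∑ z ∈ Sbox d Λ, ∑ i : Fin d, ∑ j : Fin d, hess d u i j z * hess d v i j z := by
        refine Eq.symm ?_
        rw [Finset.sum_comm]
        exact Finset.sum_congr rfl fun i _ => Finset.sum_comm

end UV

end GreenAux

namespace GreenAux

lemma green_delta {d : ℕ} (Λ : Finset (Zd d)) (t : Zd d) (g w : Zd d → ℝ)
    (hg : IsGreen d Λ t g) (hw : ∀ z, z ∉ Λ → w z = 0) :
    ∑ᶠ z, bilap d g z * w z = w t := by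
  rw [finsum_eq_single _ t ?_]
  · rw [hg.2.1, one_mul]
  · intro b hb
    by_cases hbΛ : b ∈ Λ
    · rw [hg.2.2 b hbΛ hb, zero_mul]
    · rw [hw b hbΛ, mul_zero]

end GreenAux

open GreenAux

/-- Identity `G_Λ(x,y) = (∇₁²G_{Λ,x}, ∇₁²G_{Λ,y})_{L²(ℤ^d)}` and the
Cauchy–Schwarz bound `|G_Λ(x,y)| ≤ √(G_Λ(x,x)·G_Λ(y,y))`. -/
theorem green_identity_and_CS (d : ℕ) (hd : 1 ≤ d) (Λ : Finset (Zd d))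
    (x y : Zd d) (hx : x ∈ Λ) (hy : y ∈ Λ)
    (gx gy : Zd d → ℝ) (hgx : IsGreen d Λ x gx) (hgy : IsGreen d Λ y gy) :
    (gy x = ∑ᶠ z : Zd d, ∑ i : Fin d, ∑ j : Fin d, hess d gx i j z * hess d gy i j z) ∧
    |gy x| ≤ Real.sqrt (gx x * gy y) := by
  have h1 : gy x = ∑ᶠ z : Zd d, ∑ i : Fin d, ∑ j : Fin d, hess d gx i j z * hess d gy i j z :=
    (green_delta Λ x gx gy hgx hgy.1).symm.trans (key Λ gx gy hgx.1 hgy.1)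
  have h2 : gx x = ∑ᶠ z : Zd d, ∑ i : Fin d, ∑ j : Fin d, hess d gx i j z * hess d gx i j z :=
    (green_delta Λ x gx gx hgx hgx.1).symm.trans (key Λ gx gx hgx.1 hgx.1)
  have h3 : gy y = ∑ᶠ z : Zd d, ∑ i : Fin d, ∑ j : Fin d, hess d gy i j z * hess d gy i j z :=
    (green_delta Λ y gy gy hgy hgy.1).symm.trans (key Λ gy gy hgy.1 hgy.1)
  refine ⟨h1, ?_⟩
  have E1 := finsum_eq_sum_of_support_subset _ (hess_supp Λ gx hgx.1 gy)
  have E2 := finsum_eq_sum_of_support_subset _ (hess_supp Λ gx hgx.1 gx)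
  have E3 := finsum_eq_sum_of_support_subset _ (hess_supp Λ gy hgy.1 gy)
  have flat : ∀ F : Zd d → Fin d → Fin d → ℝ,
      (∑ z ∈ Sbox d Λ, ∑ i : Fin d, ∑ j : Fin d, F z i j)
        = ∑ t ∈ Sbox d Λ ×ˢ ((Finset.univ : Finset (Fin d)) ×ˢ Finset.univ),
            F t.1 t.2.1 t.2.2 := by
    intro F
    refine Eq.symm ?_
    rw [Finset.sum_product]
    refine Finset.sum_congr rfl fun z _ => ?_
    rw [Finset.sum_product]
  have CS := Finset.sum_mul_sq_le_sq_mul_sq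
    (Sbox d Λ ×ˢ ((Finset.univ : Finset (Fin d)) ×ˢ Finset.univ))
    (fun t => hess d gx t.2.1 t.2.2 t.1) (fun t => hess d gy t.2.1 t.2.2 t.1)
  have hP2 : (gy x) ^ 2 ≤ gx x * gy y := by
    rw [h1, h2, h3, E1, E2, E3, flat, flat, flat]
    calc (∑ t ∈ Sbox d Λ ×ˢ ((Finset.univ : Finset (Fin d)) ×ˢ Finset.univ),
            hess d gx t.2.1 t.2.2 t.1 * hess d gy t.2.1 t.2.2 t.1) ^ 2
        ≤ (∑ t ∈ Sbox d Λ ×ˢ ((Finset.univ : Finset (Fin d)) ×ˢ Finset.univ),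
            (hess d gx t.2.1 t.2.2 t.1) ^ 2) *
          ∑ t ∈ Sbox d Λ ×ˢ ((Finset.univ : Finset (Fin d)) ×ˢ Finset.univ),
            (hess d gy t.2.1 t.2.2 t.1) ^ 2 := CS
      _ = _ := by
          congr 1
          · exact Finset.sum_congr rfl fun t _ => pow_two _
          · exact Finset.sum_congr rfl fun t _ => pow_two _
  calc |gy x| = Real.sqrt ((gy x) ^ 2) := (Real.sqrt_sq_eq_abs _).symm
    _ ≤ Real.sqrt (gx x * gy y) := Real.sqrt_le_sqrt hP2
end
end

section
/- Let N be a natural number and let p, r be real numbers with 0 ≤ p ≤ r ≤ 1/2 and r > 0. Then Σ_{j=⌈rN⌉}^{N} binom(N,j)·p^j ≤ (p/r²)^{rN}, where binom(N,j) is the binomial coefficient and the right-hand side is a real power. -/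
/-!
Above the threshold `j ≥ r N`, writing `p ^ j = (p / r) ^ j r ^ j` and comparing with the binomial
weights `C(N, j) r ^ j (1 - r) ^ (N - j)`, whose total mass is `1`, bounds the tail by
`(p / r) ^ (r N) / (1 - r) ^ ((1 - r) N)`. For `r ≤ 1 / 2` one has
`r ^ r ≤ (1 - r) ^ (1 - r)`, so the denominator is at least `r ^ (r N)`.
-/

open MeasureTheory Finset Filter
open scoped Pointwise

noncomputable section

/-- Weighted AM–GM with weights `s, 1 - s` at the points `s, 1 + s`, where `s = r / (1 - r)`,
gives `s ^ s * (1 + s) ^ (1 - s) ≤ 1`; raising this to the power `1 - r = 1 / (1 + s)` yields the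
claim. -/
lemma rpow_self_le_one_sub_rpow_one_sub {r : ℝ} (h0 : 0 ≤ r) (h : r ≤ 1 / 2) :
    r ^ r ≤ (1 - r) ^ (1 - r) := by
  have h1 : 0 < 1 - r := by linarith
  set s : ℝ := r / (1 - r) with hs
  have hs0 : 0 ≤ s := div_nonneg h0 h1.le
  have hs1 : s ≤ 1 := by rw [hs, div_le_one h1]; linarith
  have hsr : s * (1 - r) = r := div_mul_cancel₀ r h1.ne'
  have hinv : 1 + s = (1 - r)⁻¹ := by rw [hs]; field_simp; ring
  have amgm : s ^ s * (1 + s) ^ (1 - s) ≤ 1 := by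
    calc s ^ s * (1 + s) ^ (1 - s) ≤ s * s + (1 - s) * (1 + s) :=
          Real.geom_mean_le_arith_mean2_weighted hs0 (by linarith) hs0 (by linarith) (by ring)
      _ = 1 := by ring
  have hpow : (s ^ s * (1 + s) ^ (1 - s)) ^ (1 - r) = s ^ r * ((1 - r) ^ (1 - 2 * r))⁻¹ := by
    rw [Real.mul_rpow (by positivity) (by positivity), ← Real.rpow_mul hs0,
      ← Real.rpow_mul (by positivity), hsr, hinv, Real.inv_rpow h1.le,
      show (1 - s) * (1 - r) = 1 - 2 * r by linear_combination -hsr]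
  have key : s ^ r ≤ (1 - r) ^ (1 - 2 * r) := by
    have := Real.rpow_le_one (by positivity) amgm h1.le
    rwa [hpow, ← div_eq_mul_inv, div_le_one (by positivity)] at this
  calc r ^ r = (1 - r) ^ r * s ^ r := by rw [← Real.mul_rpow h1.le hs0, mul_comm, hsr]
    _ ≤ (1 - r) ^ r * (1 - r) ^ (1 - 2 * r) := by gcongr
    _ = (1 - r) ^ (1 - r) := by rw [← Real.rpow_add h1]; ring_nf

lemma sum_Icc_pow_mul_pow_mul_choose_le_one {r : ℝ} (h0 : 0 ≤ r) (h1 : r ≤ 1) (m N : ℕ) :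
    ∑ j ∈ Icc m N, r ^ j * (1 - r) ^ (N - j) * N.choose j ≤ 1 := by
  calc ∑ j ∈ Icc m N, r ^ j * (1 - r) ^ (N - j) * N.choose j
      ≤ ∑ j ∈ range (N + 1), r ^ j * (1 - r) ^ (N - j) * N.choose j := by
        refine sum_le_sum_of_subset_of_nonneg (fun j hj => ?_) (fun j _ _ => ?_)
        · simp only [mem_Icc, mem_range] at hj ⊢; omega
        · have : 0 ≤ 1 - r := by linarith
          positivity
    _ = 1 := by rw [← add_pow, add_sub_cancel, one_pow]

section BinomialTail

variable {N j : ℕ} {p r : ℝ}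

lemma choose_mul_pow_mul_rpow_le (hp : 0 ≤ p) (hpr : p ≤ r) (hr0 : 0 < r) (hr1 : r ≤ 1)
    (hj : r * N ≤ j) (hjN : j ≤ N) :
    N.choose j * p ^ j * (1 - r) ^ ((1 - r) * N) ≤
      (p / r) ^ (r * N) * (r ^ j * (1 - r) ^ (N - j) * N.choose j) := by
  have h1 : 0 ≤ 1 - r := by linarith
  have hratio : (p / r) ^ j ≤ (p / r) ^ (r * N) := by
    rw [← Real.rpow_natCast]
    exact Real.rpow_le_rpow_of_exponent_ge' (by positivity) ((div_le_one hr0).mpr hpr)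
      (by positivity) hj
  have hcompl : (1 - r) ^ ((1 - r) * N) ≤ (1 - r) ^ (N - j) := by
    rw [← Real.rpow_natCast, Nat.cast_sub hjN]
    exact Real.rpow_le_rpow_of_exponent_ge' h1 (by linarith)
      (sub_nonneg.mpr (by exact_mod_cast hjN)) (by linarith)
  calc N.choose j * p ^ j * (1 - r) ^ ((1 - r) * N)
      = (p / r) ^ j * r ^ j * (1 - r) ^ ((1 - r) * N) * N.choose j := by
        rw [← mul_pow, div_mul_cancel₀ _ hr0.ne']; ring
    _ ≤ (p / r) ^ (r * N) * r ^ j * (1 - r) ^ (N - j) * N.choose j := by gcongr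
    _ = _ := by ring

lemma sum_Icc_choose_mul_pow_le (hp : 0 ≤ p) (hpr : p ≤ r) (hr0 : 0 < r) (hr1 : r < 1) :
    ∑ j ∈ Icc ⌈r * N⌉₊ N, (N.choose j : ℝ) * p ^ j ≤
      (p / r) ^ (r * N) / (1 - r) ^ ((1 - r) * N) := by
  have h1 : 0 < 1 - r := by linarith
  rw [le_div_iff₀ (by positivity), sum_mul]
  calc ∑ j ∈ Icc ⌈r * N⌉₊ N, (N.choose j : ℝ) * p ^ j * (1 - r) ^ ((1 - r) * N)
      ≤ ∑ j ∈ Icc ⌈r * N⌉₊ N,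
          (p / r) ^ (r * N) * (r ^ j * (1 - r) ^ (N - j) * N.choose j) := by
        refine sum_le_sum fun j hj => ?_
        rw [mem_Icc, Nat.ceil_le] at hj
        exact choose_mul_pow_mul_rpow_le hp hpr hr0 hr1.le hj.1 hj.2
    _ ≤ (p / r) ^ (r * N) := by
        rw [← mul_sum]
        exact mul_le_of_le_one_right (by positivity)
          (sum_Icc_pow_mul_pow_mul_choose_le_one hr0.le hr1.le _ N)

end BinomialTail

/-- Tail bound for binomial sums. -/
theorem binomial_tail_bound (N : ℕ) (p r : ℝ)
    (hp : 0 ≤ p) (hpr : p ≤ r) (hr : r ≤ 1/2) (hr0 : 0 < r) :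
    ∑ j ∈ Finset.Icc ⌈r * (N : ℝ)⌉₊ N, (N.choose j : ℝ) * p ^ j
      ≤ (p / r^2) ^ (r * (N : ℝ)) := by
  have h1 : 0 < 1 - r := by linarith
  have hentropy : r ^ (r * N) ≤ (1 - r) ^ ((1 - r) * N) := by
    rw [Real.rpow_mul hr0.le, Real.rpow_mul h1.le]
    gcongr
    exact rpow_self_le_one_sub_rpow_one_sub hr0.le hr
  calc ∑ j ∈ Icc ⌈r * N⌉₊ N, (N.choose j : ℝ) * p ^ j
      ≤ (p / r) ^ (r * N) / (1 - r) ^ ((1 - r) * N) :=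
        sum_Icc_choose_mul_pow_le hp hpr hr0 (by linarith)
    _ ≤ (p / r) ^ (r * N) / r ^ (r * N) := by gcongr
    _ = (p / r ^ 2) ^ (r * N) := by
        rw [← Real.div_rpow (by positivity) hr0.le, div_div, sq]
end
end
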